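/- The high-SNR asymptotic gap between the sensing rates of S-SIC (noise variance 1) and C-SIC (noise variance σ_c² = 1 + p_c Σ_k α_k) equals (NM/L)·log₂ σ_c² = (NM/L)·log₂(1 + p_c Σ_{k=1}^K α_k) > 0; that is, lim_{p_s→∞} [R_s^s(p_s) − R_s^c(p_s)] = (NM/L)·log₂(1 + p_c Σ_k α_k). -/

import Mathlib

open Matrix Finset Filter
open scoped ComplexOrder

/-!
Write `C(p)` for the maximal sensing rate at power `p`. Rescaling the waveform by `σ_c` shows that
the C-SIC rate at power `p` is `C(p / σ_c²)`. Since `det (1 + Sᴴ R S) = det R · det (R⁻¹ + S Sᴴ)`,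
AM–GM on the eigenvalues of `R⁻¹ + S Sᴴ` bounds `C(p)` above, and the waveform with
`S Sᴴ = (L p / N) • 1` bounds it below; the two bounds squeeze `C(p) - (N M / L) log₂ p` to a
finite limit, so `C(p) - C(p / σ_c²) → (N M / L) log₂ σ_c²`.
-/

theorem Real.prod_le_sum_div_card_pow {ι : Type*} {s : Finset ι} (hs : s.Nonempty) {z : ι → ℝ}
    (hz : ∀ i ∈ s, 0 ≤ z i) : ∏ i ∈ s, z i ≤ ((∑ i ∈ s, z i) / #s) ^ #s := by
  have hcard : (0 : ℝ) < #s := by exact_mod_cast hs.card_pos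
  have amgm := Real.geom_mean_le_arith_mean s (fun _ ↦ 1) z (fun _ _ ↦ zero_le_one)
    (by simp [hcard]) hz
  simp only [Real.rpow_one, one_mul, sum_const, nsmul_eq_mul, mul_one] at amgm
  calc ∏ i ∈ s, z i = ((∏ i ∈ s, z i) ^ (#s : ℝ)⁻¹) ^ #s := by
        rw [← Real.rpow_natCast, ← Real.rpow_mul (prod_nonneg hz), inv_mul_cancel₀ hcard.ne',
          Real.rpow_one]
    _ ≤ _ := pow_le_pow_left₀ (Real.rpow_nonneg (prod_nonneg hz) _) amgm _

namespace Matrix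

theorem det_one_add_mul_mul_eq {n m α : Type*} [Fintype n] [DecidableEq n] [Fintype m]
    [DecidableEq m] [CommRing α] {R : Matrix n n α} (hR : IsUnit R.det) (A : Matrix n m α)
    (B : Matrix m n α) :
    (1 + B * R * A).det = R.det * (R⁻¹ + A * B).det := by
  rw [Matrix.mul_assoc, det_one_add_mul_comm, ← det_mul, Matrix.mul_add, mul_nonsing_inv _ hR,
    Matrix.mul_assoc]

theorem submatrix_one_mul_conjTranspose {m l α : Type*} [Fintype l] [DecidableEq m]
    [DecidableEq l] [Semiring α] [StarRing α] {e : m → l} (he : Function.Injective e) :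
    (1 : Matrix l l α).submatrix e id * ((1 : Matrix l l α).submatrix e id)ᴴ = 1 := by
  rw [conjTranspose_submatrix, conjTranspose_one, ← submatrix_mul _ _ _ id _ Function.bijective_id,
    Matrix.one_mul, submatrix_one _ he]

section RCLike

variable {n m 𝕜 : Type*} [Fintype n] [Fintype m] [DecidableEq m] [RCLike 𝕜] {A : Matrix n n 𝕜}

theorem PosDef.re_det_one_add_conjTranspose_mul_mul_pos (hA : A.PosDef) (S : Matrix n m 𝕜) :
    0 < RCLike.re (1 + Sᴴ * A * S).det :=
  (RCLike.pos_iff.mp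
    (PosDef.one.add_posSemidef (hA.posSemidef.conjTranspose_mul_mul_same S)).det_pos).1

variable [DecidableEq n]

theorem PosSemidef.re_det_le_re_trace_div_card_pow [Nonempty n] (hA : A.PosSemidef) :
    RCLike.re A.det ≤ (RCLike.re A.trace / Fintype.card n) ^ Fintype.card n := by
  rw [hA.1.det_eq_prod_eigenvalues, hA.1.trace_eq_sum_eigenvalues, ← RCLike.ofReal_prod,
    ← RCLike.ofReal_sum, RCLike.ofReal_re, RCLike.ofReal_re, ← card_univ]
  exact Real.prod_le_sum_div_card_pow univ_nonempty fun i _ ↦ hA.eigenvalues_nonneg i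

theorem IsHermitian.det_one_add_smul (hA : A.IsHermitian) (t : ℝ) :
    (1 + (t : 𝕜) • A).det = ∏ i, ((1 + t * hA.eigenvalues i : ℝ) : 𝕜) := by
  have hcfc : 1 + (t : 𝕜) • A = cfc (fun x ↦ 1 + t * x) A := by
    rw [cfc_const_add 1 (fun x ↦ t * x) A, cfc_const_mul t (fun x ↦ x) A, cfc_id' ℝ A, map_one,
      RCLike.real_smul_eq_coe_smul (K := 𝕜)]
  rw [hcfc, hA.cfc_eq]
  simp [IsHermitian.cfc, -Unitary.conjStarAlgAut_apply]

theorem PosSemidef.pow_mul_re_det_le_re_det_one_add_smul (hA : A.PosSemidef) {t : ℝ}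
    (ht : 0 ≤ t) :
    t ^ Fintype.card n * RCLike.re A.det ≤ RCLike.re (1 + (t : 𝕜) • A).det := by
  rw [hA.1.det_one_add_smul, hA.1.det_eq_prod_eigenvalues, ← RCLike.ofReal_prod,
    ← RCLike.ofReal_prod, RCLike.ofReal_re, RCLike.ofReal_re, ← card_univ, ← prod_const,
    ← prod_mul_distrib]
  exact prod_le_prod (fun i _ ↦ mul_nonneg ht (hA.eigenvalues_nonneg i))
    fun i _ ↦ by linarith [hA.eigenvalues_nonneg i]

theorem PosDef.re_det_one_add_conjTranspose_mul_mul_le [Nonempty n] (hA : A.PosDef)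
    (S : Matrix n m 𝕜) :
    RCLike.re (1 + Sᴴ * A * S).det ≤
      RCLike.re A.det * ((RCLike.re A⁻¹.trace + RCLike.re (S * Sᴴ).trace) / Fintype.card n) ^
        Fintype.card n := by
  have hdetA := RCLike.pos_iff.mp hA.det_pos
  have hB : (A⁻¹ + S * Sᴴ).PosDef := hA.inv.add_posSemidef (posSemidef_self_mul_conjTranspose S)
  rw [det_one_add_mul_mul_eq (isUnit_iff_ne_zero.mpr hA.det_pos.ne') S Sᴴ, RCLike.mul_re,
    hdetA.2, zero_mul, sub_zero, ← map_add, ← trace_add]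
  exact mul_le_mul_of_nonneg_left hB.posSemidef.re_det_le_re_trace_div_card_pow hdetA.1.le

end RCLike

section ComplexScaling

variable {n m : Type*} [Fintype n] (s : ℝ)

theorem ofReal_smul_mul_conjTranspose_ofReal_smul (S : Matrix m n ℂ) :
    ((s : ℂ) • S) * ((s : ℂ) • S)ᴴ = ((s * s : ℝ) : ℂ) • (S * Sᴴ) := by
  simp only [conjTranspose_smul, Complex.star_def, Complex.conj_ofReal, Matrix.smul_mul,
    Matrix.mul_smul, smul_smul, Complex.ofReal_mul]

theorem conjTranspose_ofReal_smul_mul_mul_ofReal_smul (A : Matrix n n ℂ) (S : Matrix n m ℂ) :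
    ((s : ℂ) • S)ᴴ * A * ((s : ℂ) • S) = ((s * s : ℝ) : ℂ) • (Sᴴ * A * S) := by
  simp only [conjTranspose_smul, Complex.star_def, Complex.conj_ofReal, Matrix.smul_mul,
    Matrix.mul_smul, smul_smul, Complex.ofReal_mul]

end ComplexScaling

end Matrix

open Real

theorem Real.tendsto_logb_add_mul_sub_logb (B a : ℝ) {b : ℝ} (hb : 0 < b) :
    Tendsto (fun x ↦ logb B (a + b * x) - logb B x) atTop (nhds (logb B b)) := by
  have hlim : Tendsto (fun x ↦ a * x⁻¹ + b) atTop (nhds b) := by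
    simpa using (tendsto_inv_atTop_zero.const_mul a).add_const b
  refine (hlim.logb hb.ne').congr' ?_
  filter_upwards [eventually_gt_atTop 0, hlim.eventually_ne hb.ne'] with x hx hne
  rw [show a + b * x = (a * x⁻¹ + b) * x by field_simp, logb_mul hne hx.ne', add_sub_cancel_right]

theorem tendsto_sub_comp_div_of_tendsto_sub_mul_logb {f : ℝ → ℝ} {B k c σ : ℝ} (hσ : 0 < σ)
    (hf : Tendsto (fun p ↦ f p - k * logb B p) atTop (nhds c)) :
    Tendsto (fun p ↦ f p - f (p / σ)) atTop (nhds (k * logb B σ)) := by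
  have hlim := (hf.sub (hf.comp (tendsto_id.atTop_div_const hσ))).add_const (k * logb B σ)
  rw [sub_self, zero_add] at hlim
  refine hlim.congr' ?_
  filter_upwards [eventually_gt_atTop 0] with p hp
  rw [Function.comp_apply, id, logb_div hp.ne' hσ.ne']
  ring

def achievableSensingRates (M L : ℕ) {N : ℕ} (R : Matrix (Fin N) (Fin N) ℂ) (p : ℝ) : Set ℝ :=
  {y : ℝ | ∃ S : Matrix (Fin N) (Fin L) ℂ,
      (Matrix.trace (S * Sᴴ)).re ≤ L * p ∧
      y = (M : ℝ) / L * Real.logb 2 (Matrix.det (1 + Sᴴ * R * S)).re}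

/-- The S-SIC sensing rate `R_s^s(p)`. -/
noncomputable def maxSensingRate (M L : ℕ) {N : ℕ} (R : Matrix (Fin N) (Fin N) ℂ) (p : ℝ) : ℝ :=
  sSup (achievableSensingRates M L R p)

section SensingRate

variable {N L M : ℕ} {R : Matrix (Fin N) (Fin N) ℂ} {p : ℝ}

theorem le_of_mem_achievableSensingRates (hN : 0 < N) (hR : R.PosDef) {y : ℝ}
    (hy : y ∈ achievableSensingRates M L R p) :
    y ≤ M / L * (logb 2 R.det.re + N * logb 2 ((R⁻¹.trace.re + L * p) / N)) := by
  have : Nonempty (Fin N) := ⟨⟨0, hN⟩⟩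
  have hN' : (0 : ℝ) < N := Nat.cast_pos.mpr hN
  obtain ⟨S, hS, rfl⟩ := hy
  have hdetR : 0 < R.det.re := (RCLike.pos_iff.mp hR.det_pos).1
  have hτ : 0 < R⁻¹.trace.re := (RCLike.pos_iff.mp hR.inv.trace_pos).1
  have hSS : 0 ≤ (S * Sᴴ).trace.re :=
    (RCLike.nonneg_iff.mp (posSemidef_self_mul_conjTranspose S).trace_nonneg).1
  have hdet : (1 + Sᴴ * R * S).det.re ≤
      R.det.re * ((R⁻¹.trace.re + (S * Sᴴ).trace.re) / Fintype.card (Fin N)) ^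
        Fintype.card (Fin N) :=
    hR.re_det_one_add_conjTranspose_mul_mul_le S
  rw [Fintype.card_fin] at hdet
  have hbound : (1 + Sᴴ * R * S).det.re ≤ R.det.re * ((R⁻¹.trace.re + L * p) / N) ^ N :=
    hdet.trans (mul_le_mul_of_nonneg_left
      (pow_le_pow_left₀ (div_nonneg (add_nonneg hτ.le hSS) hN'.le) (by gcongr) N) hdetR.le)
  have hX : 0 < (R⁻¹.trace.re + L * p) / N :=
    div_pos (add_pos_of_pos_of_nonneg hτ (hSS.trans hS)) hN'
  calc (M : ℝ) / L * logb 2 (1 + Sᴴ * R * S).det.re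
      ≤ M / L * logb 2 (R.det.re * ((R⁻¹.trace.re + L * p) / N) ^ N) :=
        mul_le_mul_of_nonneg_left (logb_le_logb_of_le one_lt_two
          (hR.re_det_one_add_conjTranspose_mul_mul_pos S) hbound) (by positivity)
    _ = _ := by rw [logb_mul hdetR.ne' (pow_pos hX N).ne', logb_pow]

theorem maxSensingRate_le (hN : 0 < N) (hR : R.PosDef) (hp : 0 ≤ p) :
    maxSensingRate M L R p ≤
      M / L * (logb 2 R.det.re + N * logb 2 ((R⁻¹.trace.re + L * p) / N)) :=
  csSup_le ⟨_, 0, by simpa using mul_nonneg L.cast_nonneg hp, rfl⟩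
    fun _ ↦ le_of_mem_achievableSensingRates hN hR

theorem le_maxSensingRate (hN : 0 < N) (hL : N ≤ L) (hR : R.PosDef) (hp : 0 < p) :
    M / L * (logb 2 R.det.re + N * logb 2 (L * p / N)) ≤ maxSensingRate M L R p := by
  have hN' : (0 : ℝ) < N := Nat.cast_pos.mpr hN
  have hL' : (0 : ℝ) < L := Nat.cast_pos.mpr (hN.trans_le hL)
  set t : ℝ := L * p / N with ht_def
  have ht : 0 < t := div_pos (mul_pos hL' hp) hN'
  set E : Matrix (Fin N) (Fin L) ℂ := (1 : Matrix (Fin L) (Fin L) ℂ).submatrix (Fin.castLE hL) id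
  have hE : E * Eᴴ = 1 := submatrix_one_mul_conjTranspose (Fin.castLE_injective hL)
  have hdetR : 0 < R.det.re := (RCLike.pos_iff.mp hR.det_pos).1
  refine le_csSup_of_le ⟨_, fun _ ↦ le_of_mem_achievableSensingRates hN hR⟩
    ⟨((√t : ℝ) : ℂ) • E, ?_, rfl⟩ ?_
  · rw [ofReal_smul_mul_conjTranspose_ofReal_smul, mul_self_sqrt ht.le, hE, trace_smul,
      trace_one, Fintype.card_fin]
    simp [ht_def, hN'.ne']
  · rw [conjTranspose_ofReal_smul_mul_mul_ofReal_smul, mul_self_sqrt ht.le]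
    have hdet : (1 + (t : ℂ) • (Eᴴ * R * E)).det = (1 + (t : ℂ) • R).det := by
      rw [Matrix.mul_assoc, ← Matrix.mul_smul, det_one_add_mul_comm, Matrix.smul_mul,
        Matrix.mul_assoc, hE, Matrix.mul_one]
    have hlower : t ^ N * R.det.re ≤ (1 + (t : ℂ) • R).det.re := by
      simpa using hR.posSemidef.pow_mul_re_det_le_re_det_one_add_smul ht.le
    rw [hdet]
    calc (M : ℝ) / L * (logb 2 R.det.re + N * logb 2 t) = M / L * logb 2 (t ^ N * R.det.re) := by
          rw [logb_mul (pow_pos ht N).ne' hdetR.ne', logb_pow, add_comm]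
      _ ≤ M / L * logb 2 (1 + (t : ℂ) • R).det.re :=
          mul_le_mul_of_nonneg_left
            (logb_le_logb_of_le one_lt_two (mul_pos (pow_pos ht N) hdetR) hlower) (by positivity)

theorem sSup_inv_smul_eq_maxSensingRate {σ : ℝ} (hσ : 0 < σ) (p : ℝ) :
    sSup {y : ℝ | ∃ S : Matrix (Fin N) (Fin L) ℂ,
        (Matrix.trace (S * Sᴴ)).re ≤ L * p ∧
        y = (M : ℝ) / L * Real.logb 2 (Matrix.det (1 + ((σ : ℝ) : ℂ)⁻¹ • (Sᴴ * R * S))).re} =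
      maxSensingRate M L R (p / σ) := by
  congr 1
  ext y
  constructor
  · rintro ⟨S, hS, rfl⟩
    refine ⟨(((√σ)⁻¹ : ℝ) : ℂ) • S, ?_, ?_⟩
    · rw [ofReal_smul_mul_conjTranspose_ofReal_smul, ← mul_inv, mul_self_sqrt hσ.le, trace_smul,
        smul_eq_mul, Complex.re_ofReal_mul, inv_mul_eq_div, mul_div_assoc']
      exact div_le_div_of_nonneg_right hS hσ.le
    · rw [conjTranspose_ofReal_smul_mul_mul_ofReal_smul, ← mul_inv, mul_self_sqrt hσ.le,
        Complex.ofReal_inv]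
  · rintro ⟨S, hS, rfl⟩
    refine ⟨((√σ : ℝ) : ℂ) • S, ?_, ?_⟩
    · rw [ofReal_smul_mul_conjTranspose_ofReal_smul, mul_self_sqrt hσ.le, trace_smul,
        smul_eq_mul, Complex.re_ofReal_mul]
      calc σ * (S * Sᴴ).trace.re ≤ σ * (L * (p / σ)) := mul_le_mul_of_nonneg_left hS hσ.le
        _ = L * p := by field_simp
    · rw [conjTranspose_ofReal_smul_mul_mul_ofReal_smul, mul_self_sqrt hσ.le, smul_smul,
        inv_mul_cancel₀ (Complex.ofReal_ne_zero.mpr hσ.ne'), one_smul]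

theorem tendsto_maxSensingRate_sub_mul_logb (hN : 0 < N) (hL : N ≤ L) (hR : R.PosDef) :
    Tendsto (fun p ↦ maxSensingRate M L R p - N * M / L * logb 2 p) atTop
      (nhds (M / L * (logb 2 R.det.re + N * logb 2 (L / N)))) := by
  have hLN : (0 : ℝ) < L / N :=
    div_pos (Nat.cast_pos.mpr (hN.trans_le hL)) (Nat.cast_pos.mpr hN)
  have hupper : Tendsto (fun p ↦ M / L * (logb 2 R.det.re +
      N * logb 2 ((R⁻¹.trace.re + L * p) / N)) - N * M / L * logb 2 p) atTop
      (nhds (M / L * (logb 2 R.det.re + N * logb 2 (L / N)))) := by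
    refine ((((tendsto_logb_add_mul_sub_logb 2 (R⁻¹.trace.re / N) hLN).const_mul (N : ℝ)).const_add
      (logb 2 R.det.re)).const_mul ((M : ℝ) / L)).congr fun p ↦ ?_
    rw [add_div, mul_div_right_comm]
    ring
  refine tendsto_of_tendsto_of_tendsto_of_le_of_le' tendsto_const_nhds hupper ?_ ?_
  · filter_upwards [eventually_gt_atTop 0] with p hp
    have hlower := le_maxSensingRate (M := M) hN hL hR hp
    rw [mul_div_right_comm, logb_mul hLN.ne' hp.ne'] at hlower
    linear_combination hlower
  · filter_upwards [eventually_gt_atTop 0] with p hp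
    linear_combination maxSensingRate_le (M := M) (L := L) hN hR hp.le

end SensingRate

/-- Corollary 1: the high-SNR gap between the maximized sensing rates of S-SIC
(noise variance `1`) and C-SIC (noise variance `σ_c² = 1 + p_c ∑ₖ αₖ`) is
`(NM/L) log₂(1 + p_c ∑ₖ αₖ) > 0`. -/
theorem SSIC_CSIC_sensing_gap (N L M K : ℕ) (hN : 0 < N) (hL : N ≤ L) (hM : N ≤ M)
    (R : Matrix (Fin N) (Fin N) ℂ) (hR : R.PosDef)
    (pc : ℝ) (hpc : 0 < pc) (α : Fin K → ℝ) (hα : ∀ k, 0 < α k) (hK : 0 < K) :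
    (0 : ℝ) < ((N : ℝ) * M / L) * Real.logb 2 (1 + pc * ∑ k, α k) ∧
    Tendsto (fun ps : ℝ =>
      sSup {y : ℝ | ∃ S : Matrix (Fin N) (Fin L) ℂ,
          (Matrix.trace (S * Sᴴ)).re ≤ L * ps ∧
          y = (M : ℝ) / L * Real.logb 2 (Matrix.det (1 + Sᴴ * R * S)).re} -
      sSup {y : ℝ | ∃ S : Matrix (Fin N) (Fin L) ℂ,
          (Matrix.trace (S * Sᴴ)).re ≤ L * ps ∧
          y = (M : ℝ) / L * Real.logb 2
            (Matrix.det (1 + ((1 + pc * ∑ k, α k : ℝ) : ℂ)⁻¹ • (Sᴴ * R * S))).re})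
      atTop (nhds (((N : ℝ) * M / L) * Real.logb 2 (1 + pc * ∑ k, α k))) := by
  have hσ : 1 < 1 + pc * ∑ k, α k :=
    lt_add_of_pos_right 1 (mul_pos hpc (sum_pos (fun k _ ↦ hα k) ⟨⟨0, hK⟩, mem_univ _⟩))
  have hNML : (0 : ℝ) < N * M / L := by
    have hL0 := hN.trans_le hL
    have hM0 := hN.trans_le hM
    positivity
  refine ⟨mul_pos hNML (logb_pos one_lt_two hσ), ?_⟩
  refine (tendsto_sub_comp_div_of_tendsto_sub_mul_logb (zero_lt_one.trans hσ)
    (tendsto_maxSensingRate_sub_mul_logb (M := M) hN hL hR)).congr fun p ↦ ?_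
  rw [sSup_inv_smul_eq_maxSensingRate (zero_lt_one.trans hσ)]
  rfl
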